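/- arXiv:2401.02373 — 2 statements merged into one kernel-verified Lean document; each statement's English description precedes it below -/
import Mathlib

section
/- If G is a connected graph of order at least 3 with girth at least 5, then every outer mutual-visibility set of G is an independent set. -/
namespace MutualVisibility

open SimpleGraph

variable {V W : Type*}

/-- `x` and `y` are `X`-visible in `G`: there is a shortest `x,y`-path all of whose
internal vertices avoid `X`. -/
def Visible (G : SimpleGraph V) (X : Set V) (x y : V) : Prop :=
  ∃ p : G.Walk x y, p.length = G.dist x y ∧ ∀ v ∈ p.support, v ≠ x → v ≠ y → v ∉ X

/-- `X` is a mutual-visibility set: any two vertices of `X` are `X`-visible. -/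
def IsMutualVisSet (G : SimpleGraph V) (X : Set V) : Prop :=
  ∀ x ∈ X, ∀ y ∈ X, Visible G X x y

/-- outer mutual-visibility set -/
def IsOuterMutualVisSet (G : SimpleGraph V) (X : Set V) : Prop :=
  IsMutualVisSet G X ∧ ∀ x ∈ X, ∀ y ∉ X, Visible G X x y

/-- dual mutual-visibility set -/
def IsDualMutualVisSet (G : SimpleGraph V) (X : Set V) : Prop :=
  IsMutualVisSet G X ∧ ∀ x ∉ X, ∀ y ∉ X, Visible G X x y

/-- total mutual-visibility set -/
def IsTotalMutualVisSet (G : SimpleGraph V) (X : Set V) : Prop :=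
  ∀ x y : V, Visible G X x y

/-- mutual-visibility number μ(G) -/
noncomputable def mu (G : SimpleGraph V) : ℕ :=
  sSup {k | ∃ X : Set V, IsMutualVisSet G X ∧ X.ncard = k}

/-- outer mutual-visibility number μ_o(G) -/
noncomputable def muOuter (G : SimpleGraph V) : ℕ :=
  sSup {k | ∃ X : Set V, IsOuterMutualVisSet G X ∧ X.ncard = k}

/-- dual mutual-visibility number μ_d(G) -/
noncomputable def muDual (G : SimpleGraph V) : ℕ :=
  sSup {k | ∃ X : Set V, IsDualMutualVisSet G X ∧ X.ncard = k}

/-- total mutual-visibility number μ_t(G) -/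
noncomputable def muTotal (G : SimpleGraph V) : ℕ :=
  sSup {k | ∃ X : Set V, IsTotalMutualVisSet G X ∧ X.ncard = k}

/-- `H` contains a subgraph copy of `F`. -/
def ContainsCopy (F : SimpleGraph W) (H : SimpleGraph V) : Prop :=
  ∃ f : W → V, Function.Injective f ∧ ∀ a b, F.Adj a b → H.Adj (f a) (f b)

/-- The Turán number ex(n; F): max number of edges of an `n`-vertex graph with no copy of `F`. -/
noncomputable def exNum (n : ℕ) (F : SimpleGraph W) : ℕ :=
  sSup {k | ∃ H : SimpleGraph (Fin n), ¬ ContainsCopy F H ∧ H.edgeSet.ncard = k}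

/-- The direct (tensor/categorical) product of graphs. -/
def directProd (G : SimpleGraph V) (H : SimpleGraph W) : SimpleGraph (V × W) where
  Adj x y := G.Adj x.1 y.1 ∧ H.Adj x.2 y.2
  symm := ⟨fun _ _ h => ⟨h.1.symm, h.2.symm⟩⟩
  loopless := ⟨fun _ h => G.irrefl h.1⟩

/-- The join `G + H` of two graphs. -/
def graphJoin (G : SimpleGraph V) (H : SimpleGraph W) : SimpleGraph (V ⊕ W) where
  Adj u v := match u, v with
    | Sum.inl a, Sum.inl b => G.Adj a b
    | Sum.inr a, Sum.inr b => H.Adj a b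
    | _, _ => True
  symm := ⟨fun u v => match u, v with
    | Sum.inl _, Sum.inl _ => fun h => G.adj_symm h
    | Sum.inr _, Sum.inr _ => fun h => H.adj_symm h
    | Sum.inl _, Sum.inr _ => fun _ => trivial
    | Sum.inr _, Sum.inl _ => fun _ => trivial⟩
  loopless := ⟨fun u => match u with
    | Sum.inl _ => fun h => G.irrefl h
    | Sum.inr _ => fun h => H.irrefl h⟩

/-- A big-μ graph: `G = (K_1 ∪ K_t) + H` for some `t ≥ 0` and some graph `H`. -/
def IsBigMu {V : Type} (G : SimpleGraph V) : Prop :=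
  ∃ (t : ℕ) (W : Type) (H : SimpleGraph W),
    Nonempty (G ≃g graphJoin ((⊤ : SimpleGraph (Fin 1)) ⊕g (⊤ : SimpleGraph (Fin t))) H)

/-- A cograph: a graph with no induced path on four vertices. -/
def IsCograph (G : SimpleGraph V) : Prop :=
  ¬ ∃ f : Fin 4 → V, Function.Injective f ∧
      ∀ a b, (pathGraph 4).Adj a b ↔ G.Adj (f a) (f b)

/-- The Petersen graph, realized as the Kneser graph K(5,2). -/
def petersen : SimpleGraph {s : Finset (Fin 5) // s.card = 2} where
  Adj a b := Disjoint a.1 b.1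
  symm := ⟨fun _ _ h => h.symm⟩
  loopless := by
    refine ⟨?_⟩
    rintro ⟨s, hs⟩ h
    rw [disjoint_self, Finset.bot_eq_empty] at h
    subst h
    simp at hs

/-!
If two vertices `x, y` of `X` were adjacent, connectivity and `|V| ≥ 3` give an edge `yz`
(say) leaving `{x, y}`. Without triangles `d(x, z) = 2`, so the `X`-visibility of `x` and `z`
provides a common neighbour `m ∉ X` of `x` and `z`. Then `m ≠ y`, and `x y z m` is a 4-cycle.
-/

section

variable {G : SimpleGraph V} {X : Set V} {a b c : V}

theorem _root_.SimpleGraph.not_adj_of_four_le_egirth (hg : 4 ≤ G.egirth) (hab : G.Adj a b)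
    (hbc : G.Adj b c) : ¬ G.Adj c a := fun hca => by
  have hcyc : (Walk.cons hab (.cons hbc (.cons hca .nil))).IsCycle := by
    simp [Walk.isCycle_def, Walk.isTrail_def, hab.ne, hbc.ne, hca.ne, hab.ne', hca.ne']
  have := le_egirth.mp hg a _ hcyc
  norm_num at this

theorem _root_.SimpleGraph.commonNeighbors_subsingleton_of_five_le_egirth (hg : 5 ≤ G.egirth)
    (hac : a ≠ c) : (G.commonNeighbors a c).Subsingleton := by
  intro b hb d hd
  rw [mem_commonNeighbors] at hb hd
  by_contra hbd
  have hcyc : (Walk.cons hb.1 (.cons hb.2.symm (.cons hd.2 (.cons hd.1.symm .nil)))).IsCycle := by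
    simp [Walk.isCycle_def, Walk.isTrail_def, hb.1.ne, hd.1.ne, hd.2.ne, hb.1.ne', hb.2.ne',
      hd.1.ne', hac, hbd, hac.symm]
  have := le_egirth.mp hg a _ hcyc
  norm_num at this

theorem _root_.SimpleGraph.dist_eq_two_of_four_le_egirth (hg : 4 ≤ G.egirth) (hab : G.Adj a b)
    (hbc : G.Adj b c) (hac : a ≠ c) : G.dist a c = 2 := by
  have : G.edist a c = 2 :=
    edist_eq_two_iff.mpr ⟨hac, fun hac' => not_adj_of_four_le_egirth hg hab hbc hac'.symm,
      ⟨b, G.mem_commonNeighbors.mpr ⟨hab, hbc.symm⟩⟩⟩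
  simp [SimpleGraph.dist, this]

theorem _root_.SimpleGraph.Connected.exists_adj_notMem_of_card_lt [Fintype V] {S : Finset V}
    (hconn : G.Connected) (hS : S.card < Fintype.card V) (hne : S.Nonempty) :
    ∃ u ∈ S, ∃ v ∉ S, G.Adj u v := by
  obtain ⟨a, ha⟩ := hne
  obtain ⟨w, -, hw⟩ := Finset.exists_mem_notMem_of_card_lt_card hS
  obtain ⟨d, -, hd⟩ := (hconn a w).some.exists_boundary_dart S ha hw
  exact ⟨d.fst, hd.1, d.snd, hd.2, d.adj⟩

theorem Visible.exists_mem_commonNeighbors_notMem (h : Visible G X a c)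
    (hd : G.dist a c = 2) : ∃ m ∈ G.commonNeighbors a c, m ∉ X := by
  obtain ⟨p, hp, hpX⟩ := h
  rw [hd] at hp
  match p, hp with
  | .cons ham (.cons hmc .nil), _ =>
    exact ⟨_, G.mem_commonNeighbors.mpr ⟨ham, hmc.symm⟩, hpX _ (by simp) ham.ne' hmc.ne⟩

theorem IsOuterMutualVisSet.visible (hX : IsOuterMutualVisSet G X) (ha : a ∈ X) (c : V) :
    Visible G X a c := by
  by_cases hc : c ∈ X
  · exact hX.1 a ha c hc
  · exact hX.2 a ha c hc

theorem IsOuterMutualVisSet.eq_of_adj_of_adj (hg : 5 ≤ G.egirth)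
    (hX : IsOuterMutualVisSet G X) (ha : a ∈ X) (hb : b ∈ X) (hab : G.Adj a b)
    (hbc : G.Adj b c) : c = a := by
  by_contra hca
  have hac : a ≠ c := Ne.symm hca
  obtain ⟨m, hm, hmX⟩ := (hX.visible ha c).exists_mem_commonNeighbors_notMem
    (dist_eq_two_of_four_le_egirth (le_trans (by norm_num) hg) hab hbc hac)
  have hbm : b = m := commonNeighbors_subsingleton_of_five_le_egirth hg hac
    (G.mem_commonNeighbors.mpr ⟨hab, hbc.symm⟩) hm
  exact hmX (hbm ▸ hb)

end

theorem outer_mv_set_indep_of_girth_ge_five {V : Type*} [Fintype V]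
    (G : SimpleGraph V) (hconn : G.Connected) (hcard : 3 ≤ Fintype.card V)
    (hgirth : 5 ≤ G.egirth) (X : Set V) (hX : IsOuterMutualVisSet G X) :
    ∀ x ∈ X, ∀ y ∈ X, ¬ G.Adj x y := by
  classical
  intro x hx y hy hxy
  obtain ⟨u, hu, v, hv, huv⟩ := hconn.exists_adj_notMem_of_card_lt
    (Finset.card_le_two.trans_lt hcard) (Finset.insert_nonempty x {y})
  simp only [Finset.mem_insert, Finset.mem_singleton, not_or] at hu hv
  rcases hu with rfl | rfl
  · exact hv.2 (hX.eq_of_adj_of_adj hgirth hy hx hxy.symm huv)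
  · exact hv.1 (hX.eq_of_adj_of_adj hgirth hx hy hxy huv)
end MutualVisibility
end

section
/- For n ≥ 3, the total mutual-visibility number of L(K_n) equals the Turán number ex(n; C_4), the maximum number of edges of an n-vertex graph containing no 4-cycle. -/
namespace MutualVisibility

open SimpleGraph

variable {V W : Type*}

/-!
`L(K_n)` has diameter two, so `X` is a total mutual-visibility set exactly when any two disjoint
edges `ab`, `cd` of `K_n` have a common neighbour in `L(K_n)` outside `X`. Those common neighbours
are precisely `ac`, `ad`, `bc`, `bd`, so `X` fails exactly when, read as a graph on `n` vertices,
it contains the 4-cycle `a c b d`. Hence the total mutual-visibility sets of `L(K_n)` are the edge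
sets of the `C₄`-free graphs on `n` vertices, and the two maxima agree.
-/

section Visible

variable {G : SimpleGraph V} {X : Set V} {x y : V}

lemma visible_self (x : V) : Visible G X x x :=
  ⟨.nil, by simp, by simp +contextual⟩

lemma visible_of_adj (h : G.Adj x y) : Visible G X x y :=
  ⟨.cons h .nil, by simp [dist_eq_one_iff_adj.mpr h], by simp +contextual⟩

lemma visible_iff_of_edist_eq_two (h : G.edist x y = 2) :
    Visible G X x y ↔ ∃ g ∈ G.commonNeighbors x y, g ∉ X := by
  have hdist : G.dist x y = 2 := by rw [SimpleGraph.dist, h]; rfl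
  constructor
  · rintro ⟨p, hp, hX⟩
    rw [hdist] at hp
    have hx : G.Adj x (p.getVert 1) := by simpa using p.adj_getVert_succ (i := 0) (by omega)
    have hy : G.Adj (p.getVert 1) y := by
      simpa [← hp, p.getVert_length] using p.adj_getVert_succ (i := 1) (by omega)
    exact ⟨p.getVert 1, G.mem_commonNeighbors.mpr ⟨hx, hy.symm⟩,
      hX _ (p.getVert_mem_support 1) hx.ne' hy.ne⟩
  · rintro ⟨g, hg, hgX⟩
    rw [mem_commonNeighbors] at hg
    refine ⟨.cons hg.1 (.cons hg.2.symm .nil), by simp [hdist], ?_⟩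
    simp only [Walk.support_cons, Walk.support_nil, List.mem_cons, List.not_mem_nil]
    rintro v (rfl | rfl | rfl | h) hvx hvy <;> first | contradiction | exact hgX

end Visible

lemma mem_commonNeighbors_lineGraph_iff {G : SimpleGraph V} {x y g : G.edgeSet}
    (hxy : ∀ v ∈ (x : Sym2 V), v ∉ (y : Sym2 V)) :
    g ∈ G.lineGraph.commonNeighbors x y ↔
      ∃ u ∈ (x : Sym2 V), ∃ w ∈ (y : Sym2 V), (g : Sym2 V) = s(u, w) := by
  simp only [mem_commonNeighbors, lineGraph_adj_iff_exists]
  constructor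
  · rintro ⟨⟨-, u, hux, hug⟩, -, w, hwy, hwg⟩
    have huw : u ≠ w := by rintro rfl; exact hxy u hux hwy
    exact ⟨u, hux, w, hwy, (Sym2.mem_and_mem_iff huw).mp ⟨hug, hwg⟩⟩
  · rintro ⟨u, hux, w, hwy, hg⟩
    have hwg : w ∈ (g : Sym2 V) := hg ▸ Sym2.mem_mk_right u w
    refine ⟨⟨?_, u, hux, hg ▸ Sym2.mem_mk_left u w⟩, ?_, w, hwy, hwg⟩
    · rintro rfl; exact hxy w hwg hwy
    · rintro rfl; exact hxy u hux (hg ▸ Sym2.mem_mk_left u w)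

lemma containsCopy_cycleGraph_four_iff (H : SimpleGraph V) :
    ContainsCopy (cycleGraph 4) H ↔
      ∃ a b c d, a ≠ b ∧ c ≠ d ∧ H.Adj a c ∧ H.Adj a d ∧ H.Adj b c ∧ H.Adj b d := by
  constructor
  · rintro ⟨f, hf, hadj⟩
    exact ⟨f 0, f 2, f 1, f 3, hf.ne (by decide), hf.ne (by decide),
      hadj 0 1 (by decide), hadj 0 3 (by decide), hadj 2 1 (by decide), hadj 2 3 (by decide)⟩
  · rintro ⟨a, b, c, d, hab, hcd, hac, had, hbc, hbd⟩
    refine ⟨![a, c, b, d], ?_, ?_⟩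
    · intro i j hij
      fin_cases i <;> fin_cases j <;> simp_all [eq_comm, hac.ne, had.ne, hbc.ne, hbd.ne]
    · intro i j hij
      fin_cases i <;> fin_cases j <;> simp_all +decide [H.adj_comm]

lemma visible_lineGraph_top_iff {H : SimpleGraph V} {x y : (⊤ : SimpleGraph V).edgeSet}
    {a b c d : V} (hx : (x : Sym2 V) = s(a, b)) (hy : (y : Sym2 V) = s(c, d))
    (hac : a ≠ c) (had : a ≠ d) (hbc : b ≠ c) (hbd : b ≠ d) :
    Visible (⊤ : SimpleGraph V).lineGraph {e | ↑e ∈ H.edgeSet} x y ↔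
      ¬ (H.Adj a c ∧ H.Adj a d ∧ H.Adj b c ∧ H.Adj b d) := by
  have hdisj : ∀ v ∈ (x : Sym2 V), v ∉ (y : Sym2 V) := by
    simp only [hx, hy, Sym2.mem_iff]
    grind
  have hedist : (⊤ : SimpleGraph V).lineGraph.edist x y = 2 := by
    refine edist_eq_two_iff.mpr
      ⟨?_, ?_, ⟨s(a, c), (⊤ : SimpleGraph V).mem_edgeSet.mpr hac⟩, ?_⟩
    · rintro rfl
      exact hdisj a (hx ▸ Sym2.mem_mk_left a b) (hx ▸ Sym2.mem_mk_left a b)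
    · rw [lineGraph_adj_iff_exists]
      rintro ⟨-, v, hvx, hvy⟩
      exact hdisj v hvx hvy
    · exact (mem_commonNeighbors_lineGraph_iff hdisj).mpr
        ⟨a, hx ▸ Sym2.mem_mk_left a b, c, hy ▸ Sym2.mem_mk_left c d, rfl⟩
  rw [visible_iff_of_edist_eq_two hedist]
  have hcommon : (∃ g ∈ (⊤ : SimpleGraph V).lineGraph.commonNeighbors x y,
      g ∉ {e : (⊤ : SimpleGraph V).edgeSet | ↑e ∈ H.edgeSet}) ↔
      ∃ u ∈ (x : Sym2 V), ∃ w ∈ (y : Sym2 V), ¬ H.Adj u w := by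
    simp only [mem_commonNeighbors_lineGraph_iff hdisj]
    constructor
    · rintro ⟨g, ⟨u, hu, w, hw, hg⟩, hgH⟩
      exact ⟨u, hu, w, hw, by simpa [hg] using hgH⟩
    · rintro ⟨u, hu, w, hw, huw⟩
      have hne : (⊤ : SimpleGraph V).Adj u w := fun h => hdisj u hu (h ▸ hw)
      exact ⟨⟨s(u, w), (⊤ : SimpleGraph V).mem_edgeSet.mpr hne⟩, ⟨u, hu, w, hw, rfl⟩,
        by simpa using huw⟩
  rw [hcommon, hx, hy]
  simp only [Sym2.mem_iff]
  grind

lemma isTotalMutualVisSet_lineGraph_top_iff (H : SimpleGraph V) :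
    IsTotalMutualVisSet (⊤ : SimpleGraph V).lineGraph {e | ↑e ∈ H.edgeSet} ↔
      ¬ ContainsCopy (cycleGraph 4) H := by
  rw [containsCopy_cycleGraph_four_iff]
  constructor
  · rintro hX ⟨a, b, c, d, hab, hcd, hac, had, hbc, hbd⟩
    let x : (⊤ : SimpleGraph V).edgeSet :=
      ⟨s(a, b), (⊤ : SimpleGraph V).mem_edgeSet.mpr hab⟩
    let y : (⊤ : SimpleGraph V).edgeSet :=
      ⟨s(c, d), (⊤ : SimpleGraph V).mem_edgeSet.mpr hcd⟩
    exact (visible_lineGraph_top_iff (x := x) (y := y) rfl rfl hac.ne had.ne hbc.ne hbd.ne).mp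
      (hX x y) ⟨hac, had, hbc, hbd⟩
  · intro hH x y
    by_cases hxy : x = y
    · exact hxy ▸ visible_self x
    by_cases hadj : (⊤ : SimpleGraph V).lineGraph.Adj x y
    · exact visible_of_adj hadj
    obtain ⟨⟨a, b⟩, hab⟩ := x
    obtain ⟨⟨c, d⟩, hcd⟩ := y
    have hdisj : ∀ v ∈ s(a, b), v ∉ s(c, d) := fun v hvx hvy =>
      hadj (lineGraph_adj_iff_exists.mpr ⟨hxy, v, hvx, hvy⟩)
    simp only [Sym2.mem_iff] at hdisj
    refine (visible_lineGraph_top_iff rfl rfl (by grind) (by grind) (by grind) (by grind)).mpr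
      fun h => hH ⟨a, b, c, d, (⊤ : SimpleGraph V).mem_edgeSet.mp hab,
        (⊤ : SimpleGraph V).mem_edgeSet.mp hcd, h⟩

lemma ncard_setOf_coe_mem_edgeSet (H : SimpleGraph V) :
    {e : (⊤ : SimpleGraph V).edgeSet | ↑e ∈ H.edgeSet}.ncard = H.edgeSet.ncard := by
  have himage :
      Subtype.val '' {e : (⊤ : SimpleGraph V).edgeSet | ↑e ∈ H.edgeSet} = H.edgeSet :=
    (Subtype.image_preimage_coe _ _).trans (Set.inter_eq_right.mpr (edgeSet_mono le_top))
  rw [← Set.ncard_image_of_injective _ Subtype.val_injective, himage]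

lemma setOf_coe_mem_edgeSet_fromEdgeSet (X : Set (⊤ : SimpleGraph V).edgeSet) :
    {e : (⊤ : SimpleGraph V).edgeSet | ↑e ∈ (fromEdgeSet (Subtype.val '' X)).edgeSet} =
      X := by
  ext e
  simp [edgeSet_fromEdgeSet, (⊤ : SimpleGraph V).not_isDiag_of_mem_edgeSet e.2]

theorem muTotal_lineGraph_complete_eq_ex_C4_general (n : ℕ) :
    muTotal (⊤ : SimpleGraph (Fin n)).lineGraph = exNum n (cycleGraph 4) := by
  unfold muTotal exNum
  congr 1
  ext k
  constructor
  · rintro ⟨X, hX, rfl⟩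
    rw [← setOf_coe_mem_edgeSet_fromEdgeSet X] at hX ⊢
    exact ⟨_, (isTotalMutualVisSet_lineGraph_top_iff _).mp hX,
      (ncard_setOf_coe_mem_edgeSet _).symm⟩
  · rintro ⟨H, hH, rfl⟩
    exact ⟨_, (isTotalMutualVisSet_lineGraph_top_iff H).mpr hH, ncard_setOf_coe_mem_edgeSet H⟩

theorem muTotal_lineGraph_complete_eq_ex_C4 (n : ℕ) (hn : 3 ≤ n) :
    muTotal (⊤ : SimpleGraph (Fin n)).lineGraph = exNum n (cycleGraph 4) :=
  muTotal_lineGraph_complete_eq_ex_C4_general n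
end MutualVisibility
end
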